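/- Let G = (V, E) be a finite simple graph with m ≥ 1 edges, let i ≥ 2, and let nonnegative weights satisfy w_0 = 0, w_1 = 1 and w_{i−1} + w_{i+1} > 2·w_i. Let α be an integer with α ≥ m·(w_{i−1} + w_{i+1}) + 1 and α ≥ i + 2. Construct the hypergraph H whose vertex set is V together with new vertices s_1, …, s_α and t_1, …, t_α, and whose hyperedges are: all 2-element subsets of {s_1, …, s_α}, all 2-element subsets of {t_1, …, t_α}, and for each edge {x, y} ∈ E the two hyperedges {s_1, …, s_{i−1}, x, y, t_1, …, t_{i+1}} and {s_1, …, s_{i+1}, x, y, t_1, …, t_{i−1}}. Then the minimum, over all cuts S* with s_1 ∈ S* and t_1 ∉ S*, of the cardinality-based cost of S* equals m·(w_{i−1} + w_{i+1}) − (w_{i−1} + w_{i+1} − 2·w_i)·mc(G), where mc(G) is the maximum number of edges of G crossing a bipartition of V. -/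

import Mathlib

/-- The split value of a hyperedge `e` with respect to a cut `S`:
`min (|e ∩ S|, |e \ S|)`. -/
def splitVal {W : Type*} [DecidableEq W] (S e : Finset W) : ℕ :=
  min (e ∩ S).card (e \ S).card

/-- The vertex set of the constructed hypergraph: the original vertices `V`
together with `s`-vertices and `t`-vertices (indexed by naturals). -/
abbrev Vtx (V : Type*) := V ⊕ ℕ ⊕ ℕ

/-- The vertex `s_i`. -/
def sV {V : Type*} (i : ℕ) : Vtx V := Sum.inr (Sum.inl i)

/-- The vertex `t_i`. -/
def tV {V : Type*} (i : ℕ) : Vtx V := Sum.inr (Sum.inr i)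

/-- The set `{s_1, …, s_j}`. -/
def sSet (V : Type*) [DecidableEq V] (j : ℕ) : Finset (Vtx V) := (Finset.Icc 1 j).image sV

/-- The set `{t_1, …, t_j}`. -/
def tSet (V : Type*) [DecidableEq V] (j : ℕ) : Finset (Vtx V) := (Finset.Icc 1 j).image tV

/-- The two endpoints of a graph edge, as a `Finset`. -/
def pairFinset {V : Type*} [DecidableEq V] (e : Sym2 V) : Finset V :=
  Sym2.lift ⟨fun x y => ({x, y} : Finset V), fun _ _ => Finset.pair_comm _ _⟩ e

/-- The image `{x, y}` (inside `Vtx V`) of a graph edge `{x, y}`. -/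
def edgeImg {V : Type*} [DecidableEq V] (e : Sym2 V) : Finset (Vtx V) :=
  (pairFinset e).image Sum.inl

/-- The maximum cut value of `G`: the maximum over subsets `U` of the vertex set
of the number of edges with exactly one endpoint in `U`. -/
def maxCut {V : Type*} [Fintype V] [DecidableEq V] (G : SimpleGraph V)
    [DecidableRel G.Adj] : ℕ :=
  Finset.univ.sup fun U : Finset V =>
    (G.edgeFinset.filter (fun e => (pairFinset e ∩ U).card = 1)).card

/-- The hyperedge family built from `G`: the 2-element subsets of the two cliques,
and for each edge `{x,y}` of `G` the two hyperedges
`{s_1,…,s_{i-1},x,y,t_1,…,t_{i+1}}` and `{s_1,…,s_{i+1},x,y,t_1,…,t_{i-1}}`. -/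
def H4 {V : Type*} [Fintype V] [DecidableEq V] (G : SimpleGraph V) [DecidableRel G.Adj]
    (α i : ℕ) : Finset (Finset (Vtx V)) :=
  (sSet V α).powersetCard 2 ∪ (tSet V α).powersetCard 2 ∪
    G.edgeFinset.image (fun e => sSet V (i - 1) ∪ edgeImg e ∪ tSet V (i + 1)) ∪
    G.edgeFinset.image (fun e => sSet V (i + 1) ∪ edgeImg e ∪ tSet V (i - 1))

/-! A cut that separates the `s`-clique or the `t`-clique already pays at least `α - 1`, which
exceeds the claimed optimum, so an optimal cut contains every `s_j` and no `t_j`. For such a cut,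
if `c ∈ {0, 1, 2}` endpoints of an edge of `G` lie on the `s`-side, the two hyperedges of that edge
have split values `i - 1 + c` and `i + 1 - c`: they cost `w_{i-1} + w_{i+1}`, or `2 w_i` when the
edge is cut (`c = 1`). Minimising the cost is therefore maximising the cut of `G`. -/

open Finset

section Cost

variable {W : Type*} [DecidableEq W]

def cardCost (w : ℕ → ℝ) (H : Finset (Finset W)) (S : Finset W) : ℝ :=
  ∑ e ∈ H, w (splitVal S e)

lemma cardCost_mono {w : ℕ → ℝ} (hw : ∀ n, 0 ≤ w n) {H H' : Finset (Finset W)} (h : H' ⊆ H)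
    (S : Finset W) : cardCost w H' S ≤ cardCost w H S :=
  sum_le_sum_of_subset_of_nonneg h fun _ _ _ => hw _

lemma splitVal_eq_zero_of_subset {S e : Finset W} (h : e ⊆ S) : splitVal S e = 0 := by
  simp [splitVal, sdiff_eq_empty_iff_subset.2 h]

lemma splitVal_eq_zero_of_disjoint {S e : Finset W} (h : Disjoint e S) : splitVal S e = 0 := by
  simp [splitVal, disjoint_iff_inter_eq_empty.1 h]

lemma splitVal_union_union {X Y Z S : Finset W} (hX : X ⊆ S) (hZ : Disjoint Z S)
    (hXY : Disjoint X Y) (hYZ : Disjoint Y Z) :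
    splitVal S (X ∪ Y ∪ Z) = min (#X + #(Y ∩ S)) (#(Y \ S) + #Z) := by
  have hin : (X ∪ Y ∪ Z) ∩ S = X ∪ Y ∩ S := by
    ext x
    have := @hX x
    have : x ∈ Z → x ∉ S := fun h => disjoint_left.1 hZ h
    simp only [mem_inter, mem_union]
    tauto
  have hout : (X ∪ Y ∪ Z) \ S = Y \ S ∪ Z := by
    ext x
    have := @hX x
    have : x ∈ Z → x ∉ S := fun h => disjoint_left.1 hZ h
    simp only [mem_sdiff, mem_union]
    tauto
  rw [splitVal, hin, hout, card_union_of_disjoint (hXY.mono_right inter_subset_left),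
    card_union_of_disjoint (hYZ.mono_left sdiff_subset)]

lemma card_inter_mul_card_sdiff_le (T S : Finset W) :
    #(T ∩ S) * #(T \ S) ≤ #{p ∈ T.powersetCard 2 | splitVal S p = 1} := by
  rw [← card_product]
  refine card_le_card_of_injOn (fun uv => {uv.1, uv.2}) ?_ ?_
  · rintro ⟨u, v⟩ huv
    simp only [coe_product, Set.mem_prod, mem_coe, mem_inter, mem_sdiff] at huv
    obtain ⟨⟨huT, huS⟩, hvT, hvS⟩ := huv
    have hne : u ≠ v := by rintro rfl; exact hvS huS
    have hin : ({u, v} : Finset W) ∩ S = {u} := by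
      ext x; simp only [mem_inter, mem_insert, mem_singleton]; grind
    have hout : ({u, v} : Finset W) \ S = {v} := by
      ext x; simp only [mem_sdiff, mem_insert, mem_singleton]; grind
    rw [mem_coe, mem_filter, mem_powersetCard, insert_subset_iff, singleton_subset_iff,
      card_pair hne, splitVal, hin, hout]
    simp [huT, hvT]
  · rintro ⟨u, v⟩ huv ⟨u', v'⟩ huv' (h : ({u, v} : Finset W) = {u', v'})
    simp only [coe_product, Set.mem_prod, mem_coe, mem_inter, mem_sdiff] at huv huv'
    have hu : u ∈ ({u', v'} : Finset W) := h ▸ mem_insert_self u {v}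
    have hv : v ∈ ({u', v'} : Finset W) := h ▸ mem_insert_of_mem (mem_singleton_self v)
    simp only [mem_insert, mem_singleton] at hu hv
    grind

/-- The split pairs number `a * b ≥ a + b - 1`, where `a, b ≥ 1` are the sizes of the two sides. -/
lemma card_sub_one_le_cardCost_powersetCard_two {w : ℕ → ℝ} (hw1 : w 1 = 1)
    (hw : ∀ n, 0 ≤ w n) {T S : Finset W} (hin : (T ∩ S).Nonempty) (hout : (T \ S).Nonempty) :
    (#T : ℝ) - 1 ≤ cardCost w (T.powersetCard 2) S := by
  have hsplit : #T ≤ #(T ∩ S) * #(T \ S) + 1 := by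
    have := card_inter_add_card_sdiff T S
    have := hin.card_pos
    have := hout.card_pos
    nlinarith
  calc (#T : ℝ) - 1 ≤ #(T ∩ S) * #(T \ S) := by
        rw [sub_le_iff_le_add]; exact_mod_cast hsplit
    _ ≤ #{p ∈ T.powersetCard 2 | splitVal S p = 1} := by
        exact_mod_cast card_inter_mul_card_sdiff_le T S
    _ = ∑ p ∈ T.powersetCard 2 with splitVal S p = 1, w (splitVal S p) := by
        rw [sum_congr rfl fun p hp => by rw [(mem_filter.1 hp).2, hw1]]
        simp
    _ ≤ cardCost w (T.powersetCard 2) S :=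
        sum_le_sum_of_subset_of_nonneg (filter_subset _ _) fun _ _ _ => hw _

lemma cardCost_powersetCard_eq_zero {w : ℕ → ℝ} (hw0 : w 0 = 0) {T S : Finset W} {k : ℕ}
    (h : T ⊆ S ∨ Disjoint T S) : cardCost w (T.powersetCard k) S = 0 := by
  refine sum_eq_zero fun p hp => ?_
  have hpT := (mem_powersetCard.1 hp).1
  rcases h with h | h
  · rw [splitVal_eq_zero_of_subset (hpT.trans h), hw0]
  · rw [splitVal_eq_zero_of_disjoint (h.mono_left hpT), hw0]

end Cost

section Construction

variable {V : Type*} [DecidableEq V]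

def gadget (V : Type*) [DecidableEq V] (j k : ℕ) (e : Sym2 V) : Finset (Vtx V) :=
  sSet V j ∪ edgeImg e ∪ tSet V k

lemma pairFinset_eq_toFinset (e : Sym2 V) : pairFinset e = e.toFinset := by
  induction e with
  | _ x y => exact Sym2.toFinset_mk_eq.symm

lemma pairFinset_injective : Function.Injective (pairFinset (V := V)) := fun e e' h =>
  Sym2.ext fun x => by simpa [pairFinset_eq_toFinset] using congrArg (x ∈ ·) h

lemma sV_mem_sSet {j k : ℕ} (h1 : 1 ≤ k) (hk : k ≤ j) : sV k ∈ sSet V j :=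
  mem_image.2 ⟨k, mem_Icc.2 ⟨h1, hk⟩, rfl⟩

lemma tV_mem_tSet {j k : ℕ} (h1 : 1 ≤ k) (hk : k ≤ j) : tV k ∈ tSet V j :=
  mem_image.2 ⟨k, mem_Icc.2 ⟨h1, hk⟩, rfl⟩

lemma sSet_mono {j k : ℕ} (h : j ≤ k) : sSet V j ⊆ sSet V k :=
  image_subset_image (Icc_subset_Icc le_rfl h)

lemma tSet_mono {j k : ℕ} (h : j ≤ k) : tSet V j ⊆ tSet V k :=
  image_subset_image (Icc_subset_Icc le_rfl h)

lemma card_sSet (j : ℕ) : #(sSet V j) = j := by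
  rw [sSet, card_image_of_injective _ fun a b h => by simpa [sV] using h, Nat.card_Icc]; omega

lemma card_tSet (j : ℕ) : #(tSet V j) = j := by
  rw [tSet, card_image_of_injective _ fun a b h => by simpa [tV] using h, Nat.card_Icc]; omega

lemma disjoint_sSet_tSet (j k : ℕ) : Disjoint (sSet V j) (tSet V k) := by
  simp [disjoint_left, sSet, tSet, sV, tV]

lemma disjoint_sSet_edgeImg (j : ℕ) (e : Sym2 V) : Disjoint (sSet V j) (edgeImg e) := by
  simp [disjoint_left, sSet, edgeImg, sV]

lemma disjoint_edgeImg_tSet (e : Sym2 V) (k : ℕ) : Disjoint (edgeImg e) (tSet V k) := by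
  simp [disjoint_left, tSet, edgeImg, tV]

@[simp] lemma toLeft_sSet (j : ℕ) : (sSet V j).toLeft = ∅ := by
  ext; simp [sSet, sV]

@[simp] lemma toLeft_tSet (j : ℕ) : (tSet V j).toLeft = ∅ := by
  ext; simp [tSet, tV]

@[simp] lemma toLeft_edgeImg (e : Sym2 V) : (edgeImg e).toLeft = pairFinset e := by
  ext; simp [edgeImg]

lemma toLeft_gadget (j k : ℕ) (e : Sym2 V) : (gadget V j k e).toLeft = pairFinset e := by
  simp [gadget, toLeft_union]

lemma card_edgeImg {e : Sym2 V} (he : ¬ e.IsDiag) : #(edgeImg e) = 2 := by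
  rw [edgeImg, card_image_of_injective _ Sum.inl_injective, pairFinset_eq_toFinset,
    Sym2.card_toFinset_of_not_isDiag e he]

lemma card_edgeImg_inter (e : Sym2 V) (S : Finset (Vtx V)) :
    #(edgeImg e ∩ S) = #(pairFinset e ∩ S.toLeft) := by
  have : edgeImg e ∩ S = (pairFinset e ∩ S.toLeft).image Sum.inl := by
    ext x; cases x <;> simp [edgeImg]
  rw [this, card_image_of_injective _ Sum.inl_injective]

lemma splitVal_gadget {α j k : ℕ} {S : Finset (Vtx V)} (hS : sSet V α ⊆ S)
    (hT : Disjoint (tSet V α) S) (hj : j ≤ α) (hk : k ≤ α) {e : Sym2 V} (he : ¬ e.IsDiag) :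
    splitVal S (gadget V j k e) =
      min (j + #(pairFinset e ∩ S.toLeft)) (2 - #(pairFinset e ∩ S.toLeft) + k) := by
  have hcard := card_sdiff_add_card_inter (edgeImg e) S
  rw [card_edgeImg he, card_edgeImg_inter] at hcard
  rw [gadget, splitVal_union_union ((sSet_mono hj).trans hS) (hT.mono_left (tSet_mono hk))
    (disjoint_sSet_edgeImg j e) (disjoint_edgeImg_tSet e k), card_sSet, card_tSet,
    card_edgeImg_inter]
  omega

lemma exists_separating_cut (α : ℕ) (U : Finset V) :
    ∃ S : Finset (Vtx V), sSet V α ⊆ S ∧ Disjoint (tSet V α) S ∧ S.toLeft = U := by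
  refine ⟨U.disjSum ((Icc 1 α).disjSum ∅), ?_, by simp [disjoint_left, tSet, tV], toLeft_disjSum⟩
  intro x hx
  obtain ⟨k, hk, rfl⟩ := mem_image.1 hx
  simpa [sV] using hk

end Construction

section Graph

variable {V : Type*} [Fintype V] [DecidableEq V]

def cutSize (G : SimpleGraph V) [DecidableRel G.Adj] (U : Finset V) : ℕ :=
  #{e ∈ G.edgeFinset | #(pairFinset e ∩ U) = 1}

lemma cutSize_le_maxCut (G : SimpleGraph V) [DecidableRel G.Adj] (U : Finset V) :
    cutSize G U ≤ maxCut G :=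
  le_sup (f := cutSize G) (mem_univ U)

lemma exists_cutSize_eq_maxCut (G : SimpleGraph V) [DecidableRel G.Adj] :
    ∃ U, cutSize G U = maxCut G :=
  let ⟨U, _, hU⟩ := exists_mem_eq_sup univ univ_nonempty (cutSize G)
  ⟨U, hU.symm⟩

end Graph

lemma weight_add_weight_eq {w : ℕ → ℝ} {i c : ℕ} (hi : 1 ≤ i) (hc : c ≤ 2) :
    w (i - 1 + c) + w (i + 1 - c) =
      w (i - 1) + w (i + 1) - (w (i - 1) + w (i + 1) - 2 * w i) * if c = 1 then 1 else 0 := by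
  obtain ⟨k, rfl⟩ : ∃ k, i = k + 1 := ⟨i - 1, by omega⟩
  interval_cases c <;> simp [add_assoc] <;> ring

section Hypergraph

variable {V : Type*} [Fintype V] [DecidableEq V] (G : SimpleGraph V) [DecidableRel G.Adj]
  {w : ℕ → ℝ} {α i : ℕ} {S : Finset (Vtx V)}

lemma H4_eq_gadget :
    H4 G α i = (sSet V α).powersetCard 2 ∪ (tSet V α).powersetCard 2 ∪
      G.edgeFinset.image (gadget V (i - 1) (i + 1)) ∪
      G.edgeFinset.image (gadget V (i + 1) (i - 1)) :=
  rfl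

lemma cardCost_H4 :
    cardCost w (H4 G α i) S =
      cardCost w ((sSet V α).powersetCard 2) S + cardCost w ((tSet V α).powersetCard 2) S +
        ∑ e ∈ G.edgeFinset,
          (w (splitVal S (gadget V (i - 1) (i + 1) e)) +
            w (splitVal S (gadget V (i + 1) (i - 1) e))) := by
  have toLeft_clique : ∀ p ∈ (sSet V α).powersetCard 2 ∪ (tSet V α).powersetCard 2,
      p.toLeft = ∅ := by
    intro p hp
    rcases mem_union.1 hp with h | h <;>
      exact subset_empty.1 ((toLeft_subset_toLeft (mem_powersetCard.1 h).1).trans (by simp))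
  have toLeft_gadget_ne : ∀ j k e, (gadget V j k e).toLeft ≠ ∅ := by
    simp [toLeft_gadget, pairFinset_eq_toFinset]
  have gadget_injOn : ∀ j k, Set.InjOn (gadget V j k) G.edgeFinset := fun j k e _ e' _ h =>
    pairFinset_injective (by simpa only [toLeft_gadget] using congrArg toLeft h)
  have hst : Disjoint ((sSet V α).powersetCard 2) ((tSet V α).powersetCard 2) := by
    refine disjoint_left.2 fun p hs ht => ?_
    obtain ⟨x, hx⟩ := card_pos.1 (by rw [(mem_powersetCard.1 hs).2]; norm_num)
    exact disjoint_left.1 (disjoint_sSet_tSet α α) ((mem_powersetCard.1 hs).1 hx)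
      ((mem_powersetCard.1 ht).1 hx)
  have hA : Disjoint ((sSet V α).powersetCard 2 ∪ (tSet V α).powersetCard 2)
      (G.edgeFinset.image (gadget V (i - 1) (i + 1))) := by
    refine disjoint_right.2 fun p hp hclique => ?_
    obtain ⟨e, -, rfl⟩ := mem_image.1 hp
    exact toLeft_gadget_ne _ _ e (toLeft_clique _ hclique)
  have hB : Disjoint ((sSet V α).powersetCard 2 ∪ (tSet V α).powersetCard 2 ∪
      G.edgeFinset.image (gadget V (i - 1) (i + 1)))
      (G.edgeFinset.image (gadget V (i + 1) (i - 1))) := by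
    refine disjoint_right.2 fun p hp hp' => ?_
    obtain ⟨e, -, rfl⟩ := mem_image.1 hp
    rcases mem_union.1 hp' with hclique | hA
    · exact toLeft_gadget_ne _ _ e (toLeft_clique _ hclique)
    · obtain ⟨e', -, he'⟩ := mem_image.1 hA
      have hs : sV (i + 1) ∈ gadget V (i + 1) (i - 1) e :=
        mem_union_left _ (mem_union_left _ (sV_mem_sSet (by omega) le_rfl))
      rw [← he'] at hs
      simp [gadget, sSet, tSet, edgeImg, sV, tV] at hs
      omega
  rw [cardCost, H4_eq_gadget, sum_union hB, sum_union hA, sum_union hst,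
    sum_image (gadget_injOn _ _), sum_image (gadget_injOn _ _), sum_add_distrib, add_assoc]
  rfl

lemma cardCost_H4_of_separates (hw0 : w 0 = 0) (hi : 1 ≤ i) (hα : i + 1 ≤ α)
    (hS : sSet V α ⊆ S) (hT : Disjoint (tSet V α) S) :
    cardCost w (H4 G α i) S = #G.edgeFinset * (w (i - 1) + w (i + 1)) -
      (w (i - 1) + w (i + 1) - 2 * w i) * cutSize G S.toLeft := by
  have hgadgets : ∀ e ∈ G.edgeFinset,
      w (splitVal S (gadget V (i - 1) (i + 1) e)) + w (splitVal S (gadget V (i + 1) (i - 1) e)) =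
        w (i - 1) + w (i + 1) - (w (i - 1) + w (i + 1) - 2 * w i) *
          if #(pairFinset e ∩ S.toLeft) = 1 then 1 else 0 := by
    intro e he
    have he : ¬ e.IsDiag := G.not_isDiag_of_mem_edgeSet (SimpleGraph.mem_edgeFinset.1 he)
    have hc : #(pairFinset e ∩ S.toLeft) ≤ 2 :=
      (card_le_card inter_subset_left).trans_eq
        (by rw [pairFinset_eq_toFinset, Sym2.card_toFinset_of_not_isDiag e he])
    rw [← weight_add_weight_eq hi hc, splitVal_gadget hS hT (by omega) hα he,
      splitVal_gadget hS hT hα (by omega) he]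
    congr 2 <;> omega
  rw [cardCost_H4, cardCost_powersetCard_eq_zero hw0 (.inl hS),
    cardCost_powersetCard_eq_zero hw0 (.inr hT), sum_congr rfl hgadgets, sum_sub_distrib,
    sum_const, nsmul_eq_mul, ← mul_sum, sum_boole, cutSize]
  simp

lemma sub_one_le_cardCost_H4_of_not_separates (hw1 : w 1 = 1) (hw : ∀ n, 0 ≤ w n)
    (hα : 1 ≤ α) (hs : sV 1 ∈ S) (ht : tV 1 ∉ S)
    (hsep : ¬ (sSet V α ⊆ S ∧ Disjoint (tSet V α) S)) :
    (α : ℝ) - 1 ≤ cardCost w (H4 G α i) S := by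
  obtain ⟨T, hT, hin, hout⟩ : ∃ T, (T = sSet V α ∨ T = tSet V α) ∧
      (T ∩ S).Nonempty ∧ (T \ S).Nonempty := by
    rcases not_and_or.1 hsep with hS | hT
    · obtain ⟨y, hyT, hyS⟩ := not_subset.1 hS
      exact ⟨_, .inl rfl, ⟨sV 1, mem_inter.2 ⟨sV_mem_sSet le_rfl hα, hs⟩⟩,
        ⟨y, mem_sdiff.2 ⟨hyT, hyS⟩⟩⟩
    · obtain ⟨y, hyT, hyS⟩ := not_disjoint_iff.1 hT
      exact ⟨_, .inr rfl, ⟨y, mem_inter.2 ⟨hyT, hyS⟩⟩,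
        ⟨tV 1, mem_sdiff.2 ⟨tV_mem_tSet le_rfl hα, ht⟩⟩⟩
  have hsub : T.powersetCard 2 ⊆ H4 G α i := by
    rcases hT with rfl | rfl <;> intro p hp <;> simp [H4, hp]
  have hcard : #T = α := by rcases hT with rfl | rfl <;> simp [card_sSet, card_tSet]
  calc (α : ℝ) - 1 = #T - 1 := by rw [hcard]
    _ ≤ cardCost w (T.powersetCard 2) S :=
        card_sub_one_le_cardCost_powersetCard_two hw1 hw hin hout
    _ ≤ cardCost w (H4 G α i) S := cardCost_mono hw hsub S

end Hypergraph

theorem stmt5_general {V : Type*} [Fintype V] [DecidableEq V]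
    (G : SimpleGraph V) [DecidableRel G.Adj]
    (m : ℕ) (hm : m = G.edgeFinset.card)
    (i : ℕ) (hi : 2 ≤ i)
    (w : ℕ → ℝ) (hw0 : w 0 = 0) (hw1 : w 1 = 1) (hw : ∀ n, 0 ≤ w n)
    (hwi : 2 * w i < w (i - 1) + w (i + 1))
    (α : ℕ) (hα1 : (m : ℝ) * (w (i - 1) + w (i + 1)) + 1 ≤ (α : ℝ)) (hα2 : i + 2 ≤ α) :
    IsLeast {x : ℝ | ∃ S : Finset (Vtx V), sV 1 ∈ S ∧ tV 1 ∉ S ∧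
        x = ∑ e ∈ H4 G α i, w (splitVal S e)}
      ((m : ℝ) * (w (i - 1) + w (i + 1)) -
        (w (i - 1) + w (i + 1) - 2 * w i) * (maxCut G : ℝ)) := by
  subst hm
  have hgap : 0 ≤ w (i - 1) + w (i + 1) - 2 * w i := by linarith
  refine ⟨?_, ?_⟩
  · obtain ⟨U, hU⟩ := exists_cutSize_eq_maxCut G
    obtain ⟨S, hS, hT, rfl⟩ := exists_separating_cut α U
    refine ⟨S, hS (sV_mem_sSet le_rfl (by omega)),
      disjoint_left.1 hT (tV_mem_tSet le_rfl (by omega)), ?_⟩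
    rw [← cardCost, cardCost_H4_of_separates G hw0 (by omega) (by omega) hS hT, hU]
  · rintro _ ⟨S, hs1, ht1, rfl⟩
    change _ ≤ cardCost w (H4 G α i) S
    by_cases hsep : sSet V α ⊆ S ∧ Disjoint (tSet V α) S
    · rw [cardCost_H4_of_separates G hw0 (by omega) (by omega) hsep.1 hsep.2]
      gcongr
      exact cutSize_le_maxCut G _
    · have hsplit := sub_one_le_cardCost_H4_of_not_separates G (i := i) hw1 hw (by omega)
        hs1 ht1 hsep
      have hmaxCut : 0 ≤ (w (i - 1) + w (i + 1) - 2 * w i) * (maxCut G : ℝ) := by positivity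
      linarith

theorem stmt5 {V : Type*} [Fintype V] [DecidableEq V]
    (G : SimpleGraph V) [DecidableRel G.Adj]
    (m : ℕ) (hm : m = G.edgeFinset.card) (hm1 : 1 ≤ m)
    (i : ℕ) (hi : 2 ≤ i)
    (w : ℕ → ℝ) (hw0 : w 0 = 0) (hw1 : w 1 = 1) (hw : ∀ n, 0 ≤ w n)
    (hwi : 2 * w i < w (i - 1) + w (i + 1))
    (α : ℕ) (hα1 : (m : ℝ) * (w (i - 1) + w (i + 1)) + 1 ≤ (α : ℝ)) (hα2 : i + 2 ≤ α) :
    IsLeast {x : ℝ | ∃ S : Finset (Vtx V), sV 1 ∈ S ∧ tV 1 ∉ S ∧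
        x = ∑ e ∈ H4 G α i, w (splitVal S e)}
      ((m : ℝ) * (w (i - 1) + w (i + 1)) -
        (w (i - 1) + w (i + 1) - 2 * w i) * (maxCut G : ℝ)) :=
  stmt5_general G m hm i hi w hw0 hw1 hw hwi α hα1 hα2
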